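/- arXiv:math/0605574 — 3 statements merged into one kernel-verified Lean document; each statement's English description precedes it below -/
import Mathlib

section
/- Let e > 0 and r > 1 be integers. If {a_i}_{i≥0} is a sequence of positive integers satisfying a_i = e·a_{i+1} − r·a_{i+2} for all i ≥ 0, then the sequence is constant, i.e., a_i = a_0 for all i ≥ 0. -/
/-! `D n = a (n+1)^2 - a n * a (n+2)` satisfies `D n = r * D (n+1)`, so it is divisible by every
power of `r` and vanishes. Hence `a` is geometric, and a geometric sequence of nonzero integers has
an integral ratio `k` (if the ratio is `v / u` in lowest terms, `u ^ n ∣ a 0` for all `n`). Finally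
`D 0 = 0` and the recurrence give `r k^2 - e k + 1 = 0`, so `k ∣ 1`, and `k = 1` by positivity. -/

theorem Int.eq_zero_of_forall_pow_dvd {m x : ℤ} (hm : m.natAbs ≠ 1) (h : ∀ n, m ^ n ∣ x) :
    x = 0 := by
  by_contra hx
  obtain ⟨n, hn⟩ := Int.finiteMultiplicity_iff.2 ⟨hm, hx⟩
  exact hn (h _)

theorem Int.eq_zero_of_eq_mul_succ {r : ℤ} (hr : r.natAbs ≠ 1) {x : ℕ → ℤ}
    (hx : ∀ n, x n = r * x (n + 1)) (n : ℕ) : x n = 0 := by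
  refine Int.eq_zero_of_forall_pow_dvd hr fun k => ⟨x (n + k), ?_⟩
  induction k with
  | zero => simp
  | succ k ih => rw [ih, hx (n + k), ← add_assoc]; ring

section Recurrence

variable {R : Type*} [CommRing R]

def selfCasoratian (a : ℕ → R) (n : ℕ) : R :=
  a (n + 1) ^ 2 - a n * a (n + 2)

theorem selfCasoratian_eq_mul_succ {e r : R} {a : ℕ → R}
    (hrec : ∀ i, a i = e * a (i + 1) - r * a (i + 2)) (n : ℕ) :
    selfCasoratian a n = r * selfCasoratian a (n + 1) := by
  unfold selfCasoratian
  linear_combination a (n + 1) * hrec (n + 1) - a (n + 2) * hrec n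

theorem mul_apply_zero_eq_of_selfCasoratian_eq_zero [IsDomain R] {a : ℕ → R}
    (ha : ∀ n, a n ≠ 0) (hD : ∀ n, selfCasoratian a n = 0) (n : ℕ) :
    a (n + 1) * a 0 = a n * a 1 := by
  induction n with
  | zero => ring
  | succ n ih =>
    have hn := hD n
    unfold selfCasoratian at hn
    exact mul_right_cancel₀ (ha n) (by linear_combination a (n + 1) * ih - a 0 * hn)

end Recurrence

theorem Int.isUnit_of_forall_mul_eq_mul {a : ℕ → ℤ} {u v : ℤ} (huv : IsCoprime u v)
    (ha : a 0 ≠ 0) (h : ∀ n, a (n + 1) * u = a n * v) : IsUnit u := by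
  have hpow : ∀ n, a n * u ^ n = a 0 * v ^ n := by
    intro n
    induction n with
    | zero => simp
    | succ n ih => linear_combination u ^ n * h n + v * ih
  have hdvd : ∀ n, u ^ n ∣ a 0 := fun n =>
    (huv.pow (m := n) (n := n)).dvd_of_dvd_mul_right ⟨a n, by linear_combination -hpow n⟩
  by_contra hu
  exact ha (Int.eq_zero_of_forall_pow_dvd (mt Int.isUnit_iff_natAbs_eq.2 hu) hdvd)

theorem Int.dvd_of_forall_mul_eq_mul {a : ℕ → ℤ} (ha : a 0 ≠ 0)
    (h : ∀ n, a (n + 1) * a 0 = a n * a 1) : a 0 ∣ a 1 := by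
  obtain ⟨g, u, v, hg, huv, hu, hv⟩ :=
    Int.exists_gcd_one' (Int.gcd_pos_of_ne_zero_left (a 1) ha)
  have hg0 : (g : ℤ) ≠ 0 := Int.natCast_ne_zero.2 hg.ne'
  have hunit : IsUnit u := by
    refine Int.isUnit_of_forall_mul_eq_mul (Int.isCoprime_iff_gcd_eq_one.2 huv) ha fun n => ?_
    refine mul_right_cancel₀ hg0 ?_
    linear_combination h n - a (n + 1) * hu + a n * hv
  rw [hu, hv, hunit.mul_left_dvd]
  exact dvd_mul_left _ _

theorem constant_of_recurrence_general (e r : ℤ) (hr : 1 < r)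
    (a : ℕ → ℤ) (hpos : ∀ i, 0 < a i)
    (hrec : ∀ i, a i = e * a (i + 1) - r * a (i + 2)) :
    ∀ i, a i = a 0 := by
  have hD : ∀ n, selfCasoratian a n = 0 :=
    Int.eq_zero_of_eq_mul_succ (by omega) (selfCasoratian_eq_mul_succ hrec)
  have hratio := mul_apply_zero_eq_of_selfCasoratian_eq_zero (fun n => (hpos n).ne') hD
  obtain ⟨k, hk⟩ := Int.dvd_of_forall_mul_eq_mul (hpos 0).ne' hratio
  have hk1 : k = 1 := by
    have hD0 := hD 0
    unfold selfCasoratian at hD0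
    have hquad : a 0 ^ 2 * (r * k ^ 2 + 1) = a 0 ^ 2 * (e * k) := by
      linear_combination r * hD0 + a 0 * hrec 0 + (e * a 0 - r * (a 1 + a 0 * k)) * hk
    have hdvd : k ∣ 1 :=
      ⟨e - r * k, by linear_combination mul_left_cancel₀ (pow_ne_zero 2 (hpos 0).ne') hquad⟩
    exact Int.eq_one_of_dvd_one (pos_of_mul_pos_right (hk ▸ hpos 1) (hpos 0).le).le hdvd
  have hstep : ∀ n, a (n + 1) = a n := fun n =>
    mul_right_cancel₀ (hpos 0).ne' (by rw [hratio, hk, hk1, mul_one])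
  intro i
  induction i with
  | zero => rfl
  | succ i ih => rw [hstep, ih]

/-- Let `e > 0` and `r > 1` be integers.  If `{a_i}_{i ≥ 0}` is a sequence of positive
integers satisfying `a i = e * a (i+1) - r * a (i+2)` for all `i ≥ 0`, then the sequence
is constant. -/
theorem constant_of_recurrence (e r : ℤ) (he : 0 < e) (hr : 1 < r)
    (a : ℕ → ℤ) (hpos : ∀ i, 0 < a i)
    (hrec : ∀ i, a i = e * a (i + 1) - r * a (i + 2)) :
    ∀ i, a i = a 0 :=
  constant_of_recurrence_general e r hr a hpos hrec
end

section
/- Let e > 0 and r > 1 be integers. If there exists a sequence of positive integers {a_i}_{i≥0} satisfying a_i = e·a_{i+1} − r·a_{i+2} for all i ≥ 0, then e = r + 1. -/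
/-!
For a solution of `a i = e a (i+1) - r a (i+2)`, the Casoratian `a (i+1)² - a i a (i+2)` gets
multiplied by `r` at each step backwards, so over `ℤ` it is divisible by every power of `r` and
hence vanishes. The sequence is then geometric, `a n = a 0 qⁿ` with `q = a 1 / a 0`; integrality
of all its terms forces `q` to be an integer `k`, and the recurrence at `i = 0` reads
`k (e - r k) = 1`, so `k = 1` and `e = r + 1`.
-/

def casoratian {R : Type*} [CommRing R] (a : ℕ → R) (i : ℕ) : R :=
  a (i + 1) ^ 2 - a i * a (i + 2)

section Recurrence

variable {R : Type*} [CommRing R] {a : ℕ → R} {e r : R}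

theorem casoratian_eq_mul_casoratian_succ (hrec : ∀ i, a i = e * a (i + 1) - r * a (i + 2))
    (i : ℕ) : casoratian a i = r * casoratian a (i + 1) := by
  unfold casoratian
  linear_combination a (i + 1) * hrec (i + 1) - a (i + 2) * hrec i

theorem casoratian_eq_pow_mul (hrec : ∀ i, a i = e * a (i + 1) - r * a (i + 2))
    (i n : ℕ) : casoratian a i = r ^ n * casoratian a (i + n) := by
  induction n with
  | zero => simp
  | succ n ih =>
    rw [ih, casoratian_eq_mul_casoratian_succ hrec, ← add_assoc, pow_succ, mul_assoc]

end Recurrence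

theorem Int.eq_zero_of_forall_pow_dvd_s1 {r c : ℤ} (hr : r.natAbs ≠ 1) (h : ∀ n : ℕ, r ^ n ∣ c) :
    c = 0 := by
  by_contra hc
  obtain ⟨n, hn⟩ := Int.finiteMultiplicity_iff.mpr ⟨hr, hc⟩
  exact hn (h (n + 1))

theorem casoratian_eq_zero_of_recurrence {a : ℕ → ℤ} {e r : ℤ} (hr : r.natAbs ≠ 1)
    (hrec : ∀ i, a i = e * a (i + 1) - r * a (i + 2)) (i : ℕ) : casoratian a i = 0 :=
  Int.eq_zero_of_forall_pow_dvd_s1 hr fun n => ⟨_, casoratian_eq_pow_mul hrec i n⟩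

theorem mul_apply_succ_eq_of_casoratian_eq_zero {R : Type*} [CommRing R] [IsDomain R]
    {a : ℕ → R} (ha : ∀ n, a n ≠ 0) (hD : ∀ n, casoratian a n = 0) (n : ℕ) :
    a 0 * a (n + 1) = a 1 * a n := by
  induction n with
  | zero => ring
  | succ n ih =>
    refine mul_left_cancel₀ (ha n) ?_
    have hsq : a (n + 1) ^ 2 = a n * a (n + 2) := sub_eq_zero.mp (hD n)
    linear_combination a 0 * hsq.symm + a (n + 1) * ih

theorem pow_mul_apply_eq_of_mul_apply_succ_eq {M : Type*} [CommMonoid M] {a : ℕ → M}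
    (h : ∀ n, a 0 * a (n + 1) = a 1 * a n) (n : ℕ) : a 0 ^ n * a n = a 1 ^ n * a 0 := by
  induction n with
  | zero => simp
  | succ n ih =>
    calc a 0 ^ (n + 1) * a (n + 1) = a 0 ^ n * (a 0 * a (n + 1)) := by rw [pow_succ, mul_assoc]
      _ = a 1 * (a 0 ^ n * a n) := by rw [h, mul_left_comm]
      _ = a 1 ^ (n + 1) * a 0 := by rw [ih, pow_succ', mul_assoc]

theorem Int.dvd_of_forall_pow_dvd_pow_mul {x y c : ℤ} (hx : x ≠ 0) (hc : c ≠ 0)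
    (h : ∀ n : ℕ, x ^ n ∣ y ^ n * c) : x ∣ y := by
  obtain ⟨g, m, k, hg, hmk, rfl, rfl⟩ := Int.exists_gcd_one' (Int.gcd_pos_of_ne_zero_left y hx)
  have hcop : IsCoprime m k := Int.isCoprime_iff_gcd_eq_one.mpr hmk
  have hm : ∀ n : ℕ, m ^ n ∣ c := fun n => by
    have hgn : (g : ℤ) ^ n ≠ 0 := pow_ne_zero n (by exact_mod_cast hg.ne')
    have := h n
    rw [mul_pow, mul_pow, mul_right_comm, mul_dvd_mul_iff_right hgn] at this
    exact (hcop.pow (m := n) (n := n)).dvd_of_dvd_mul_left this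
  have hunit : IsUnit m := by
    by_contra hm1
    exact hc (Int.eq_zero_of_forall_pow_dvd_s1 (mt Int.isUnit_iff_natAbs_eq.mpr hm1) hm)
  exact hunit.mul_left_dvd.mpr (dvd_mul_left _ _)

theorem apply_zero_dvd_apply_one_of_casoratian_eq_zero {a : ℕ → ℤ} (ha : ∀ n, a n ≠ 0)
    (hD : ∀ n, casoratian a n = 0) : a 0 ∣ a 1 :=
  Int.dvd_of_forall_pow_dvd_pow_mul (ha 0) (ha 0) fun n =>
    ⟨a n, (pow_mul_apply_eq_of_mul_apply_succ_eq
      (mul_apply_succ_eq_of_casoratian_eq_zero ha hD) n).symm⟩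

theorem e_eq_r_add_one_of_recurrence_general (e r : ℤ) (hr : 1 < r)
    (h : ∃ a : ℕ → ℤ, (∀ i, 0 < a i) ∧ ∀ i, a i = e * a (i + 1) - r * a (i + 2)) :
    e = r + 1 := by
  obtain ⟨a, hpos, hrec⟩ := h
  have hD := casoratian_eq_zero_of_recurrence (by omega) hrec
  obtain ⟨k, hk⟩ := apply_zero_dvd_apply_one_of_casoratian_eq_zero (fun n => (hpos n).ne') hD
  have ha0 : a 0 ≠ 0 := (hpos 0).ne'
  have hsq : a 1 ^ 2 = a 0 * a 2 := sub_eq_zero.mp (hD 0)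
  have ha2 : a 2 = a 0 * k ^ 2 := mul_left_cancel₀ ha0 <| by
    linear_combination -hsq + (a 1 + a 0 * k) * hk
  have hk_unit : k * (e - r * k) = 1 := mul_left_cancel₀ ha0 <| by
    linear_combination -(hrec 0) - e * hk + r * ha2
  obtain rfl : k = 1 := by
    rcases Int.eq_one_or_neg_one_of_mul_eq_one hk_unit with h1 | rfl
    · exact h1
    · linarith [hpos 0, hpos 1]
  linarith

/-- Let `e > 0` and `r > 1` be integers.  If there exists a sequence of positive integers
`{a_i}_{i ≥ 0}` satisfying `a i = e * a (i+1) - r * a (i+2)` for all `i ≥ 0`,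
then `e = r + 1`. -/
theorem e_eq_r_add_one_of_recurrence (e r : ℤ) (he : 0 < e) (hr : 1 < r)
    (h : ∃ a : ℕ → ℤ, (∀ i, 0 < a i) ∧ ∀ i, a i = e * a (i + 1) - r * a (i + 2)) :
    e = r + 1 :=
  e_eq_r_add_one_of_recurrence_general e r hr h
end

section
/- Let e > 0 and r > 1 be integers. If {a_i}_{i≥0} is a sequence of positive integers satisfying a_i = e·a_{i+1} − r·a_{i+2} for all i ≥ 0, then a_i·a_{i+2} = a_{i+1}² for all i ≥ 0. -/
/-!
The defect `a i * a (i + 2) - a (i + 1) ^ 2` of the recurrence is multiplied by `r` when the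
index goes down by one. Hence the defect at `i` is divisible by every power of `r`, and since
`r` is not a unit of `ℤ`, it vanishes.
-/

theorem eq_zero_of_forall_pow_dvd {α : Type*} [CommMonoidWithZero α] [IsCancelMulZero α]
    [WfDvdMonoid α] {r x : α} (hr : ¬IsUnit r) (h : ∀ n, r ^ n ∣ x) : x = 0 := by
  by_contra hx
  exact FiniteMultiplicity.not_iff_forall.2 h (FiniteMultiplicity.of_not_isUnit hr hx)

theorem eq_pow_mul_of_forall_eq_mul {M : Type*} [Monoid M] {f : ℕ → M} {r : M}
    (h : ∀ j, f j = r * f (j + 1)) (k j : ℕ) : f j = r ^ k * f (j + k) := by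
  induction k with
  | zero => simp
  | succ k ih => rw [ih, h (j + k), pow_succ, mul_assoc, add_assoc]

theorem mul_sub_sq_eq_mul_of_recurrence {R : Type*} [CommRing R] {e r : R} {a : ℕ → R}
    (hrec : ∀ i, a i = e * a (i + 1) - r * a (i + 2)) (i : ℕ) :
    a i * a (i + 2) - a (i + 1) ^ 2 = r * (a (i + 1) * a (i + 3) - a (i + 2) ^ 2) := by
  linear_combination a (i + 2) * hrec i - a (i + 1) * hrec (i + 1)

theorem mul_eq_sq_of_recurrence_general (e r : ℤ) (hr : 1 < r)
    (a : ℕ → ℤ)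
    (hrec : ∀ i, a i = e * a (i + 1) - r * a (i + 2)) :
    ∀ i, a i * a (i + 2) = a (i + 1) ^ 2 := by
  intro i
  have hdvd : ∀ n, r ^ n ∣ a i * a (i + 2) - a (i + 1) ^ 2 := fun n =>
    ⟨_, eq_pow_mul_of_forall_eq_mul (f := fun j => a j * a (j + 2) - a (j + 1) ^ 2)
      (mul_sub_sq_eq_mul_of_recurrence hrec) n i⟩
  have hr_unit : ¬IsUnit r := by
    rw [Int.isUnit_iff]
    omega
  exact sub_eq_zero.1 (eq_zero_of_forall_pow_dvd hr_unit hdvd)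

/-- Let `e > 0` and `r > 1` be integers.  If `{a_i}_{i ≥ 0}` is a sequence of positive
integers satisfying `a i = e * a (i+1) - r * a (i+2)` for all `i ≥ 0`, then
`a i * a (i+2) = (a (i+1))²` for all `i ≥ 0`. -/
theorem mul_eq_sq_of_recurrence (e r : ℤ) (he : 0 < e) (hr : 1 < r)
    (a : ℕ → ℤ) (hpos : ∀ i, 0 < a i)
    (hrec : ∀ i, a i = e * a (i + 1) - r * a (i + 2)) :
    ∀ i, a i * a (i + 2) = a (i + 1) ^ 2 :=
  mul_eq_sq_of_recurrence_general e r hr a hrec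
end
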